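/- Fix μ ∈ X and a Borel probability measure P on X. Then the influence function IF(z; D, μ, P) := lim_{ε→0⁺} (D(μ; (1 − ε)·P + ε·δ_z) − D(μ; P))/ε is uniformly bounded over contamination points: sup_{z ∈ X} |IF(z; D, μ, P)| ≤ 4. -/

import Mathlib

open MeasureTheory
open scoped Classical

/-- The kernel `h` of the metric spatial depth. -/
noncomputable def mh {X : Type*} [MetricSpace X] (x₁ x₂ x₃ : X) : ℝ :=
  if x₃ = x₁ ∨ x₃ = x₂ then 0
  else (dist x₁ x₃ ^ 2 + dist x₂ x₃ ^ 2 - dist x₁ x₂ ^ 2) / (dist x₁ x₃ * dist x₂ x₃)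

/-- The metric spatial depth of `μ` with respect to the measure `P`. -/
noncomputable def msDepth {X : Type*} [MetricSpace X] [MeasurableSpace X]
    (μ : X) (P : Measure X) : ℝ :=
  1 - (1 / 2) * ∫ x₁, ∫ x₂, mh x₁ x₂ μ ∂P ∂P

lemma abs_mh_le_two {X : Type*} [MetricSpace X] (x₁ x₂ x₃ : X) : |mh x₁ x₂ x₃| ≤ 2 := by
  unfold mh
  split
  · simp
  · next h =>
    push_neg at h
    have ha : 0 < dist x₁ x₃ := dist_pos.2 fun e => h.1 e.symm
    have hb : 0 < dist x₂ x₃ := dist_pos.2 fun e => h.2 e.symm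
    have hab : 0 < dist x₁ x₃ * dist x₂ x₃ := mul_pos ha hb
    have t1 : dist x₁ x₂ ≤ dist x₁ x₃ + dist x₂ x₃ := by
      have := dist_triangle x₁ x₃ x₂; rw [dist_comm x₃ x₂] at this; linarith
    have t2 : dist x₁ x₃ ≤ dist x₁ x₂ + dist x₂ x₃ := dist_triangle x₁ x₂ x₃
    have t3 : dist x₂ x₃ ≤ dist x₂ x₁ + dist x₁ x₃ := dist_triangle x₂ x₁ x₃
    rw [dist_comm x₂ x₁] at t3
    have hc : 0 ≤ dist x₁ x₂ := dist_nonneg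
    rw [abs_le]
    constructor
    · rw [le_div_iff₀ hab]
      nlinarith
    · rw [div_le_iff₀ hab]
      nlinarith

lemma mh_comm {X : Type*} [MetricSpace X] (x₁ x₂ x₃ : X) : mh x₁ x₂ x₃ = mh x₂ x₁ x₃ := by
  unfold mh
  by_cases h : x₃ = x₁ ∨ x₃ = x₂
  · rw [if_pos h, if_pos h.symm]
  · rw [if_neg h, if_neg (fun h' => h h'.symm), dist_comm x₂ x₁, mul_comm]
    ring

lemma mh_meas {X : Type*} [MetricSpace X] [SecondCountableTopology X] [MeasurableSpace X] [BorelSpace X] (μ : X) :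
    Measurable (fun p : X × X => mh p.1 p.2 μ) := by
  unfold mh
  have h1 : MeasurableSet {p : X × X | μ = p.1 ∨ μ = p.2} := by
    have : {p : X × X | μ = p.1 ∨ μ = p.2}
        = (Prod.fst ⁻¹' {μ}) ∪ (Prod.snd ⁻¹' {μ}) := by
      ext p; simp [eq_comm]
    rw [this]
    exact (measurable_fst (measurableSet_singleton μ)).union
      (measurable_snd (measurableSet_singleton μ))
  refine Measurable.ite h1 measurable_const ?_
  have hd1 : Measurable fun p : X × X => dist p.1 μ :=
    (continuous_fst.dist continuous_const).measurable
  have hd2 : Measurable fun p : X × X => dist p.2 μ :=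
    (continuous_snd.dist continuous_const).measurable
  have hd3 : Measurable fun p : X × X => dist p.1 p.2 :=
    (continuous_fst.dist continuous_snd).measurable
  exact (((hd1.pow_const 2).add (hd2.pow_const 2)).sub (hd3.pow_const 2)).div (hd1.mul hd2)

lemma integrable_of_abs_le_two {X : Type*} [MeasurableSpace X] (ν : Measure X)
    [IsFiniteMeasure ν] {f : X → ℝ} (hf : Measurable f) (hbd : ∀ x, |f x| ≤ 2) :
    Integrable f ν :=
  (integrable_const (2 : ℝ)).mono' hf.aestronglyMeasurable
    (Filter.Eventually.of_forall fun x => by simpa [Real.norm_eq_abs] using hbd x)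

lemma integral_contam {X : Type*} [MetricSpace X] [MeasurableSpace X] [BorelSpace X]
    (P : Measure X) [IsProbabilityMeasure P] (z : X) {f : X → ℝ}
    (hf : Measurable f) (hbd : ∀ x, |f x| ≤ 2) {ε : ℝ} (h0 : 0 ≤ ε) (h1 : ε ≤ 1) :
    ∫ x, f x ∂(ENNReal.ofReal (1 - ε) • P + ENNReal.ofReal ε • Measure.dirac z)
      = (1 - ε) * ∫ x, f x ∂P + ε * f z := by
  have hfP : Integrable f P := integrable_of_abs_le_two P hf hbd
  have hfD : Integrable f (Measure.dirac z) :=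
    integrable_of_abs_le_two (Measure.dirac z) hf hbd
  rw [integral_add_measure (hfP.smul_measure ENNReal.ofReal_ne_top)
        (hfD.smul_measure ENNReal.ofReal_ne_top),
      integral_smul_measure, integral_smul_measure, integral_dirac,
      ENNReal.toReal_ofReal (by linarith), ENNReal.toReal_ofReal h0]
  simp [smul_eq_mul]

theorem msDepth_influence_function_bounded {X : Type*} [MetricSpace X] [CompleteSpace X]
    [SecondCountableTopology X] [MeasurableSpace X] [BorelSpace X]
    (μ : X) (P : Measure X) [IsProbabilityMeasure P] :
    ∀ z : X, ∃ IF : ℝ,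
      Filter.Tendsto
        (fun ε : ℝ =>
          (msDepth μ (ENNReal.ofReal (1 - ε) • P + ENNReal.ofReal ε • Measure.dirac z)
            - msDepth μ P) / ε)
        (nhdsWithin 0 (Set.Ioi 0)) (nhds IF) ∧
      |IF| ≤ 4 := by
  intro z
  -- basic measurability facts
  have hmh : Measurable (fun p : X × X => mh p.1 p.2 μ) := mh_meas μ
  have hmh1 : ∀ x₁ : X, Measurable (fun x₂ => mh x₁ x₂ μ) :=
    fun x₁ => hmh.comp measurable_prodMk_left
  have hmhz : Measurable (fun x₁ => mh x₁ z μ) :=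
    hmh.comp (measurable_id.prodMk measurable_const)
  set G : X → ℝ := fun x₁ => ∫ x₂, mh x₁ x₂ μ ∂P with hGdef
  have hGsm : StronglyMeasurable G :=
    hmh.stronglyMeasurable.integral_prod_right'
  have hGbd : ∀ x₁, |G x₁| ≤ 2 := by
    intro x₁
    have := norm_integral_le_of_norm_le_const (μ := P) (f := fun x₂ => mh x₁ x₂ μ) (C := 2)
      (Filter.Eventually.of_forall fun x => by simpa [Real.norm_eq_abs] using abs_mh_le_two x₁ x μ)
    simpa [Real.norm_eq_abs] using this
  set A : ℝ := ∫ x₁, G x₁ ∂P with hAdef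
  set B : ℝ := ∫ x₁, mh x₁ z μ ∂P with hBdef
  set D : ℝ := mh z z μ with hDdef
  have hGz : G z = B := by
    rw [hGdef, hBdef]
    exact integral_congr_ae (Filter.Eventually.of_forall fun x => mh_comm z x μ)
  have hAbd : |A| ≤ 2 := by
    have := norm_integral_le_of_norm_le_const (μ := P) (f := G) (C := 2)
      (Filter.Eventually.of_forall fun x => by simpa [Real.norm_eq_abs] using hGbd x)
    simpa [Real.norm_eq_abs] using this
  have hBbd : |B| ≤ 2 := by
    have := norm_integral_le_of_norm_le_const (μ := P) (f := fun x₁ => mh x₁ z μ) (C := 2)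
      (Filter.Eventually.of_forall fun x => by simpa [Real.norm_eq_abs] using abs_mh_le_two x z μ)
    simpa [Real.norm_eq_abs] using this
  refine ⟨A - B, ?_, ?_⟩
  · -- the difference quotient is eventually an affine function of ε
    have hev : ∀ᶠ ε in nhdsWithin (0:ℝ) (Set.Ioi 0),
        (-1/2) * ((ε - 2) * A + 2 * (1 - ε) * B + ε * D)
          = (msDepth μ (ENNReal.ofReal (1 - ε) • P + ENNReal.ofReal ε • Measure.dirac z)
              - msDepth μ P) / ε := by
      have hIoo : Set.Ioo (0:ℝ) 1 ∈ nhdsWithin (0:ℝ) (Set.Ioi 0) :=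
        Ioo_mem_nhdsGT_of_mem (by simp)
      filter_upwards [hIoo] with ε hε
      obtain ⟨hε0, hε1⟩ := hε
      set Q := ENNReal.ofReal (1 - ε) • P + ENNReal.ofReal ε • Measure.dirac z with hQ
      -- inner integral
      have hinner : ∀ x₁ : X, ∫ x₂, mh x₁ x₂ μ ∂Q = (1 - ε) * G x₁ + ε * mh x₁ z μ := by
        intro x₁
        exact integral_contam P z (hmh1 x₁) (fun x => abs_mh_le_two x₁ x μ) hε0.le hε1.le
      -- outer integral
      have houter : ∫ x₁, ∫ x₂, mh x₁ x₂ μ ∂Q ∂Q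
          = (1 - ε) * ∫ x₁, ((1 - ε) * G x₁ + ε * mh x₁ z μ) ∂P
            + ε * ((1 - ε) * G z + ε * D) := by
        rw [integral_congr_ae (Filter.Eventually.of_forall hinner)]
        exact integral_contam P z
          ((hGsm.measurable.const_mul _).add (hmhz.const_mul _))
          (fun x => by
            have h1 := hGbd x
            have h2 := abs_mh_le_two x z μ
            have := abs_add_le ((1 - ε) * G x) (ε * mh x z μ)
            rw [abs_mul, abs_mul, abs_of_nonneg (by linarith : (0:ℝ) ≤ 1 - ε),
              abs_of_nonneg hε0.le] at this
            show |(1 - ε) * G x + ε * mh x z μ| ≤ 2; nlinarith)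
          hε0.le hε1.le
      have hsplit : ∫ x₁, ((1 - ε) * G x₁ + ε * mh x₁ z μ) ∂P
          = (1 - ε) * A + ε * B := by
        rw [integral_add (((integrable_of_abs_le_two P hGsm.measurable hGbd).const_mul _))
            ((integrable_of_abs_le_two P hmhz (fun x => abs_mh_le_two x z μ)).const_mul _),
          integral_const_mul, integral_const_mul]
      have hIQ : ∫ x₁, ∫ x₂, mh x₁ x₂ μ ∂Q ∂Q
          = (1 - ε)^2 * A + 2 * ε * (1 - ε) * B + ε^2 * D := by
        rw [houter, hsplit, hGz]; ring
      have hdiff : msDepth μ Q - msDepth μ P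
          = ε * ((-1/2) * ((ε - 2) * A + 2 * (1 - ε) * B + ε * D)) := by
        unfold msDepth
        rw [hIQ, hAdef]
        have : ∫ x₁, ∫ x₂, mh x₁ x₂ μ ∂P ∂P = ∫ x₁, G x₁ ∂P := rfl
        rw [this]
        ring
      rw [hdiff]
      field_simp
    refine Filter.Tendsto.congr' hev ?_
    have hcont : Continuous fun ε : ℝ =>
        (-1/2) * ((ε - 2) * A + 2 * (1 - ε) * B + ε * D) := by continuity
    have h2 : Filter.Tendsto (fun ε : ℝ => (-1/2) * ((ε - 2) * A + 2 * (1 - ε) * B + ε * D))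
        (nhdsWithin (0:ℝ) (Set.Ioi 0))
        (nhds ((-1/2) * ((0 - 2) * A + 2 * (1 - 0) * B + 0 * D))) :=
      (hcont.tendsto 0).mono_left nhdsWithin_le_nhds
    convert h2 using 2
    ring
  · calc |A - B| ≤ |A| + |B| := abs_sub A B
    _ ≤ 4 := by linarith
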